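/- arXiv:2001.06733 — 4 statements merged into one kernel-verified Lean document; each statement's English description precedes it below -/
import Mathlib

section
/- Suppose f : X → Y and g : Y → X are continuous maps that are homotopy inverses of each other, and define aw(X) (resp. aw(Y)) as the set of points admitting a null sequence of non-trivial loops. Then f restricts to a map aw(X) → aw(Y), g restricts to a map aw(Y) → aw(X), and these restrictions are homotopy inverses; in particular aw(X) and aw(Y) are homotopy equivalent. -/
/-!
A free homotopy conjugates a loop by the track of its base point, so it preserves null-homotopy
of loops. Hence `g ∘ f ≃ id` makes `f` reflect null-homotopic loops, and such a map sends a null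
sequence of essential loops at `x` to one at `f x`: `f` maps `aw(X)` into `aw(Y)`. Every time slice
of a homotopy `g ∘ f ≃ id` is itself homotopic to the identity, so it maps `aw(X)` into itself and
the homotopy restricts to `aw(X)`; symmetrically for `f ∘ g`.
-/

/-- The algebraic 1-wild set: points admitting a null sequence of non-null-homotopic loops. -/
def awSet (X : Type*) [TopologicalSpace X] : Set X :=
  {x | ∃ γ : ℕ → Path x x, (∀ n, ¬(γ n).Homotopic (Path.refl x)) ∧
    ∀ U ∈ nhds x, ∀ᶠ n in Filter.atTop, Set.range (γ n) ⊆ U}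

open Set unitInterval

section

variable {X Y Z : Type*} [TopologicalSpace X] [TopologicalSpace Y] [TopologicalSpace Z]

theorem Path.Homotopic.Quotient.eq_refl_iff_of_trans_eq {x y : X}
    {a : Path.Homotopic.Quotient x x} {b : Path.Homotopic.Quotient y y}
    {e : Path.Homotopic.Quotient x y} (h : a.trans e = e.trans b) :
    a = .refl x ↔ b = .refl y := by
  have ha : a = (e.trans b).trans e.symm := by rw [← h, trans_assoc, trans_symm, trans_refl]
  have hb : b = e.symm.trans (a.trans e) := by rw [h, ← trans_assoc, symm_trans, refl_trans]
  constructor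
  · rintro rfl
    rw [hb, refl_trans, symm_trans]
  · rintro rfl
    rw [ha, trans_refl, trans_symm]

namespace ContinuousMap

def mapsToRestrict (f : C(X, Y)) {s : Set X} {t : Set Y} (h : MapsTo f s t) : C(s, t) :=
  ⟨h.restrict f s t, f.continuous.restrict h⟩

theorem Homotopy.homotopic_mapsToRestrict {f₀ f₁ : C(X, Y)} (H : f₀.Homotopy f₁) {s : Set X}
    {t : Set Y} (hH : ∀ τ, MapsTo (H.curry τ) s t) (h₀ : MapsTo f₀ s t) (h₁ : MapsTo f₁ s t) :
    (f₀.mapsToRestrict h₀).Homotopic (f₁.mapsToRestrict h₁) :=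
  ⟨{ toFun p := ⟨H (p.1, p.2), hH p.1 p.2.2⟩
     continuous_toFun := by fun_prop
     map_zero_left x := by ext; simp [mapsToRestrict]
     map_one_left x := by ext; simp [mapsToRestrict] }⟩

theorem Homotopy.curry_homotopic {f₀ f₁ : C(X, Y)} (H : f₀.Homotopy f₁) (τ : I) :
    (H.curry τ).Homotopic f₁ := by
  have slice : f₀.Homotopy (H.curry τ) :=
    { toFun p := H (p.1 * τ, p.2)
      continuous_toFun := by fun_prop
      map_zero_left x := by simp
      map_one_left x := by simp }
  exact Homotopic.trans ⟨slice.symm⟩ ⟨H⟩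

/- The track of the base point under `H` conjugates `γ.map f` into `γ.map g`. -/
theorem Homotopy.map_homotopic_refl_iff {f g : C(X, Y)} (H : f.Homotopy g) {x : X}
    (γ : Path x x) :
    (γ.map f.continuous).Homotopic (.refl (f x)) ↔ (γ.map g.continuous).Homotopic (.refl (g x)) := by
  simp only [← Path.Homotopic.Quotient.eq, Path.Homotopic.Quotient.mk_refl]
  refine Path.Homotopic.Quotient.eq_refl_iff_of_trans_eq (e := .mk (H.evalAt x)) ?_
  simp only [← Path.Homotopic.Quotient.mk_trans, Path.Homotopic.Quotient.eq]
  exact Path.Homotopic.map_trans_evalAt H γ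

def ReflectsNullHomotopicLoops (f : C(X, Y)) : Prop :=
  ∀ ⦃x : X⦄ (γ : Path x x), (γ.map f.continuous).Homotopic (.refl (f x)) → γ.Homotopic (.refl x)

theorem reflectsNullHomotopicLoops_id : (ContinuousMap.id X).ReflectsNullHomotopicLoops :=
  fun _ γ h => Path.map_id γ ▸ h

theorem ReflectsNullHomotopicLoops.of_comp {f : C(X, Y)} {g : C(Y, Z)}
    (h : (g.comp f).ReflectsNullHomotopicLoops) : f.ReflectsNullHomotopicLoops := fun _ γ hγ =>
  h γ (Path.map_map γ f.continuous g.continuous ▸ hγ.map g)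

theorem Homotopic.reflectsNullHomotopicLoops_iff {f g : C(X, Y)} (h : f.Homotopic g) :
    f.ReflectsNullHomotopicLoops ↔ g.ReflectsNullHomotopicLoops := by
  obtain ⟨H⟩ := h
  simp only [ReflectsNullHomotopicLoops, H.map_homotopic_refl_iff]

theorem ReflectsNullHomotopicLoops.mapsTo_awSet {f : C(X, Y)}
    (hf : f.ReflectsNullHomotopicLoops) : MapsTo f (awSet X) (awSet Y) := by
  rintro x ⟨γ, hγ, hγ_small⟩
  refine ⟨fun n => (γ n).map f.continuous, fun n h => hγ n (hf _ h), fun U hU => ?_⟩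
  filter_upwards [hγ_small _ (f.continuous.continuousAt hU)] with n hn
  rw [Path.map_coe, range_comp]
  exact image_subset_iff.mpr hn

theorem Homotopic.reflectsNullHomotopicLoops_of_id {f : C(X, X)} (h : f.Homotopic (.id X)) :
    f.ReflectsNullHomotopicLoops :=
  h.reflectsNullHomotopicLoops_iff.mpr reflectsNullHomotopicLoops_id

theorem Homotopy.homotopic_mapsToRestrict_awSet {f : C(X, X)} (H : f.Homotopy (.id X))
    (hf : MapsTo f (awSet X) (awSet X)) :
    (f.mapsToRestrict hf).Homotopic (ContinuousMap.id (awSet X)) :=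
  H.homotopic_mapsToRestrict
    (fun τ => (H.curry_homotopic τ).reflectsNullHomotopicLoops_of_id.mapsTo_awSet) hf
    (mapsTo_id _)

end ContinuousMap

end

/-- If `f : X → Y` and `g : Y → X` are homotopy inverses, then they restrict to the algebraic
1-wild sets and these restrictions are homotopy inverses; in particular `aw(X) ≃ aw(Y)`. -/
theorem stmt6 {X Y : Type*} [TopologicalSpace X] [TopologicalSpace Y]
    (f : C(X, Y)) (g : C(Y, X))
    (hgf : (g.comp f).Homotopic (ContinuousMap.id X))
    (hfg : (f.comp g).Homotopic (ContinuousMap.id Y)) :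
    (∀ x ∈ awSet X, f x ∈ awSet Y) ∧ (∀ y ∈ awSet Y, g y ∈ awSet X) ∧
    ∃ (F : C(awSet X, awSet Y)) (G : C(awSet Y, awSet X)),
      (∀ x : awSet X, (F x : Y) = f (x : X)) ∧
      (∀ y : awSet Y, (G y : X) = g (y : Y)) ∧
      (G.comp F).Homotopic (ContinuousMap.id (awSet X)) ∧
      (F.comp G).Homotopic (ContinuousMap.id (awSet Y)) := by
  have hf : MapsTo f (awSet X) (awSet Y) :=
    hgf.reflectsNullHomotopicLoops_of_id.of_comp.mapsTo_awSet
  have hg : MapsTo g (awSet Y) (awSet X) :=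
    hfg.reflectsNullHomotopicLoops_of_id.of_comp.mapsTo_awSet
  obtain ⟨H⟩ := hgf
  obtain ⟨H'⟩ := hfg
  exact ⟨hf, hg, f.mapsToRestrict hf, g.mapsToRestrict hg, fun _ => rfl, fun _ => rfl,
    H.homotopic_mapsToRestrict_awSet (hg.comp hf), H'.homotopic_mapsToRestrict_awSet (hf.comp hg)⟩
end

section
/- If H : X × [0,1] → X is a homotopy with H(x,0) = x for all x, then H maps aw(X) × [0,1] into aw(X). -/
/-! A homotopy `F` from `f` to `g` conjugates `γ.map f` into `γ.map g` by the track of the base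
point, so `f` and `g` send the same loops to null-homotopic ones. Each `H(·, t)` is homotopic to
`H(·, 0) = id`, hence keeps loops essential, and being continuous it keeps null sequences null. -/

open unitInterval

theorem Path.Homotopic.Quotient.eq_refl_iff_of_trans_eq_trans {X : Type*} [TopologicalSpace X]
    {x y : X} {a : Path.Homotopic.Quotient x x} {b : Path.Homotopic.Quotient y y}
    (q : Path.Homotopic.Quotient x y) (h : a.trans q = q.trans b) :
    a = refl x ↔ b = refl y := by
  constructor
  · rintro rfl
    simpa [← trans_assoc] using (congrArg (q.symm.trans ·) h).symm
  · rintro rfl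
    simpa using congrArg (trans · q.symm) h

theorem ContinuousMap.Homotopy.map_homotopic_refl_iff_s7 {X Y : Type*} [TopologicalSpace X]
    [TopologicalSpace Y] {f g : C(X, Y)} (F : f.Homotopy g) {x : X} (γ : Path x x) :
    (γ.map f.continuous).Homotopic (Path.refl (f x)) ↔
      (γ.map g.continuous).Homotopic (Path.refl (g x)) := by
  simp only [← Path.Homotopic.Quotient.eq, Path.Homotopic.Quotient.mk_refl]
  refine Path.Homotopic.Quotient.eq_refl_iff_of_trans_eq_trans (.mk (F.evalAt x)) ?_
  simpa only [← Path.Homotopic.Quotient.mk_trans, Path.Homotopic.Quotient.eq]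
    using Path.Homotopic.map_trans_evalAt F γ

theorem ContinuousMap.Homotopic.mapsTo_awSet {X : Type*} [TopologicalSpace X] {g : C(X, X)}
    (hg : (ContinuousMap.id X).Homotopic g) : Set.MapsTo g (awSet X) (awSet X) := by
  rintro x ⟨γ, hγ, hnull⟩
  refine ⟨fun n => (γ n).map g.continuous, fun n hn => hγ n ?_, fun U hU => ?_⟩
  · simpa using (hg.some.map_homotopic_refl_iff_s7 (γ n)).mpr hn
  · filter_upwards [hnull _ (g.continuous.continuousAt.preimage_mem_nhds hU)] with n hn
    simpa [Set.range_comp] using hn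

instance : PathConnectedSpace I :=
  isPathConnected_iff_pathConnectedSpace.mp <|
    (convex_Icc (0 : ℝ) 1).isPathConnected ⟨0, Set.left_mem_Icc.2 zero_le_one⟩

theorem ContinuousMap.homotopic_comp_prodMk_const {X Y T : Type*} [TopologicalSpace X]
    [TopologicalSpace Y] [TopologicalSpace T] [PathConnectedSpace T] (H : C(X × T, Y)) (s t : T) :
    (H.comp (.prodMk (.id X) (.const X s))).Homotopic (H.comp (.prodMk (.id X) (.const X t))) :=
  let p := PathConnectedSpace.somePath s t
  ⟨{ toContinuousMap := H.comp ⟨fun q => (q.2, p q.1), by fun_prop⟩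
     map_zero_left := by simp
     map_one_left := by simp }⟩

/-- If `H : X × [0,1] → X` is a homotopy with `H(x,0) = x` for all `x`, then `H` maps
`aw(X) × [0,1]` into `aw(X)`. -/
theorem stmt7 {X : Type*} [TopologicalSpace X]
    (H : C(X × unitInterval, X)) (h0 : ∀ x : X, H (x, 0) = x) :
    ∀ x ∈ awSet X, ∀ t : unitInterval, H (x, t) ∈ awSet X := by
  intro x hx t
  have hH : (ContinuousMap.id X).Homotopic (H.comp (.prodMk (.id X) (.const X t))) := by
    convert H.homotopic_comp_prodMk_const 0 t
    ext y
    simp [h0]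
  exact hH.mapsTo_awSet hx
end

section
/- Subdivision lemma: Let A ⊆ [0,1] be a compact nowhere dense set containing {0,1}, let α, β : [0,1] → X be continuous with α|_A = β|_A, and let 𝒰 be a cover of α(A) by open subsets of X. Then there exists a finite subdivision 0 = t₀ < t₁ < ⋯ < t_m = 1 with all tⱼ ∈ A such that for each j, either t_{j−1} and t_j are consecutive in A (i.e., A ∩ (t_{j−1}, t_j) = ∅) or there exists U ∈ 𝒰 with α([t_{j−1}, t_j]) ∪ β([t_{j−1}, t_j]) ⊆ U. -/
/-- Subdivision lemma: for a compact nowhere dense `A ⊆ [0,1]` containing `{0,1}`, paths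
`α, β` agreeing on `A`, and an open cover `𝒰` of `α(A)`, there is a finite subdivision
`0 = t₀ < t₁ < ⋯ < t_m = 1` by points of `A` such that each pair `t_{j-1}, t_j` is either
consecutive in `A` or `α([t_{j-1},t_j]) ∪ β([t_{j-1},t_j])` lies in some member of `𝒰`. -/
theorem stmt8 {X : Type*} [TopologicalSpace X] (α β : ℝ → X)
    (hα : Continuous α) (hβ : Continuous β)
    (A : Set ℝ) (hAc : IsCompact A) (hnd : IsNowhereDense A) (hA : A ⊆ Set.Icc 0 1)
    (h0 : (0:ℝ) ∈ A) (h1 : (1:ℝ) ∈ A) (hEq : Set.EqOn α β A)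
    (𝒰 : Set (Set X)) (hop : ∀ U ∈ 𝒰, IsOpen U) (hcov : α '' A ⊆ ⋃₀ 𝒰) :
    ∃ (m : ℕ) (t : ℕ → ℝ), 0 < m ∧ t 0 = 0 ∧ t m = 1 ∧ (∀ j ≤ m, t j ∈ A) ∧
      (∀ j < m, t j < t (j+1)) ∧
      ∀ j < m, (A ∩ Set.Ioo (t j) (t (j+1)) = ∅) ∨
        ∃ U ∈ 𝒰, α '' Set.Icc (t j) (t (j+1)) ∪ β '' Set.Icc (t j) (t (j+1)) ⊆ U := by
  classical
  -- Step 1: choose for each a ∈ A a radius ε a and member U a of the cover.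
  have hsel : ∀ a : A, ∃ ε > 0, ∃ U ∈ 𝒰, ∀ y ∈ Metric.ball (a:ℝ) ε, α y ∈ U ∧ β y ∈ U := by
    rintro ⟨a, ha⟩
    obtain ⟨U, hU, haU⟩ := hcov ⟨a, ha, rfl⟩
    have hopen : IsOpen (α ⁻¹' U ∩ β ⁻¹' U) :=
      ((hop U hU).preimage hα).inter ((hop U hU).preimage hβ)
    have hmem : a ∈ α ⁻¹' U ∩ β ⁻¹' U := ⟨haU, by
      simp only [Set.mem_preimage]; rw [← hEq ha]; exact haU⟩
    obtain ⟨ε, hε, hball⟩ := Metric.isOpen_iff.1 hopen a hmem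
    exact ⟨ε, hε, U, hU, fun y hy => ⟨(hball hy).1, (hball hy).2⟩⟩
  choose ε hε U hU hball using hsel
  -- Step 2: Lebesgue number δ
  obtain ⟨δ, hδ0, hδ⟩ := lebesgue_number_lemma_of_metric (s := A)
    (c := fun a : A => Metric.ball (a:ℝ) (ε a)) hAc (fun a => Metric.isOpen_ball)
    (fun x hx => Set.mem_iUnion.2 ⟨⟨x, hx⟩, Metric.mem_ball_self (hε ⟨x, hx⟩)⟩)
  set d : ℝ := δ / 2 with hd
  have hd0 : 0 < d := by positivity
  -- the step function
  set step : ℝ → ℝ := fun x =>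
    if x < 1 then
      (if sSup (A ∩ Set.Icc x (x + d)) ≤ x then sInf (A ∩ Set.Icc (x + d) 1)
       else sSup (A ∩ Set.Icc x (x + d))) else x with hstepdef
  have step1 : step 1 = 1 := by simp [hstepdef]
  -- key properties of one step
  have key : ∀ x, x ∈ A → x < 1 →
      (step x ∈ A ∧ x < step x ∧ step x ≤ 1) ∧
      ((step x ≤ x + d ∧ ∃ V ∈ 𝒰,
          α '' Set.Icc x (step x) ∪ β '' Set.Icc x (step x) ⊆ V) ∨
        (x + d ≤ step x ∧ A ∩ Set.Ioo x (step x) = ∅)) ∧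
      (x + d ≤ step x ∨ A ∩ Set.Ioc (step x) (x + d) = ∅) := by
    intro x hxA hx1
    have hxd : x < x + d := by linarith
    set s := sSup (A ∩ Set.Icc x (x + d)) with hs
    have hScpt : IsCompact (A ∩ Set.Icc x (x + d)) := hAc.inter_right isClosed_Icc
    have hSne : (A ∩ Set.Icc x (x + d)).Nonempty := ⟨x, hxA, le_refl x, le_of_lt hxd⟩
    have hsmem : s ∈ A ∩ Set.Icc x (x + d) := hScpt.sSup_mem hSne
    by_cases hcase : s ≤ x
    · -- gap case
      have hsx : s = x := le_antisymm hcase hsmem.2.1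
      have hempty : A ∩ Set.Ioc x (x + d) = ∅ := by
        ext y; simp only [Set.mem_inter_iff, Set.mem_Ioc, Set.mem_empty_iff_false,
          iff_false, not_and, and_imp]
        intro hyA hxy hyd
        have : y ≤ s := le_csSup hScpt.bddAbove ⟨hyA, le_of_lt hxy, hyd⟩
        rw [hsx] at this; exact absurd this (not_le.2 hxy)
      have hd1 : x + d < 1 := by
        by_contra h
        have : (1:ℝ) ∈ A ∩ Set.Ioc x (x + d) := ⟨h1, hx1, not_lt.1 h⟩
        rw [hempty] at this; exact this
      have hTcpt : IsCompact (A ∩ Set.Icc (x + d) 1) := hAc.inter_right isClosed_Icc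
      have hTne : (A ∩ Set.Icc (x + d) 1).Nonempty := ⟨1, h1, le_of_lt hd1, le_refl 1⟩
      have hstepx : step x = sInf (A ∩ Set.Icc (x + d) 1) := by
        simp only [hstepdef, if_pos hx1]; rw [← hs, if_pos hcase]
      have hmmem : sInf (A ∩ Set.Icc (x + d) 1) ∈ A ∩ Set.Icc (x + d) 1 :=
        hTcpt.sInf_mem hTne
      rw [hstepx]
      set m := sInf (A ∩ Set.Icc (x + d) 1) with hm
      have hgap : A ∩ Set.Ioo x m = ∅ := by
        ext y; simp only [Set.mem_inter_iff, Set.mem_Ioo, Set.mem_empty_iff_false,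
          iff_false, not_and, and_imp]
        intro hyA hxy hym
        by_cases hyd : y ≤ x + d
        · have : y ∈ A ∩ Set.Ioc x (x + d) := ⟨hyA, hxy, hyd⟩
          rw [hempty] at this; exact this
        · have hy1 : y ≤ 1 := le_trans (le_of_lt hym) hmmem.2.2
          have : m ≤ y := csInf_le hTcpt.bddBelow ⟨hyA, le_of_lt (not_le.1 hyd), hy1⟩
          exact absurd hym (not_lt.2 this)
      exact ⟨⟨hmmem.1, lt_of_lt_of_le hxd hmmem.2.1, hmmem.2.2⟩,
        Or.inr ⟨hmmem.2.1, hgap⟩, Or.inl hmmem.2.1⟩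
    · -- small (cover) case
      push_neg at hcase
      have hstepx : step x = s := by
        simp only [hstepdef, if_pos hx1]; rw [← hs, if_neg (not_le.2 hcase)]
      rw [hstepx]
      have hs1 : s ≤ 1 := (hA hsmem.1).2
      obtain ⟨a, ha⟩ := hδ x hxA
      have hsub : Set.Icc x s ⊆ Metric.ball x δ := by
        intro y hy
        rw [Metric.mem_ball, Real.dist_eq, abs_sub_lt_iff]
        constructor
        · have : y ≤ x + d := le_trans hy.2 hsmem.2.2
          rw [hd] at this; linarith
        · have := hy.1; linarith
      have hcov' : α '' Set.Icc x s ∪ β '' Set.Icc x s ⊆ U a := by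
        rintro z (⟨y, hy, rfl⟩ | ⟨y, hy, rfl⟩)
        · exact (hball a _ (ha (hsub hy))).1
        · exact (hball a _ (ha (hsub hy))).2
      refine ⟨⟨hsmem.1, hcase, hs1⟩,
        Or.inl ⟨hsmem.2.2, U a, hU a, hcov'⟩, Or.inr ?_⟩
      ext y; simp only [Set.mem_inter_iff, Set.mem_Ioc, Set.mem_empty_iff_false,
        iff_false, not_and, and_imp]
      intro hyA hsy hyd
      have : y ≤ s := le_csSup hScpt.bddAbove ⟨hyA, le_trans hsmem.2.1 (le_of_lt hsy), hyd⟩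
      exact absurd this (not_le.2 hsy)
  -- the sequence
  set t : ℕ → ℝ := fun n => step^[n] 0 with ht
  have ht0 : t 0 = 0 := rfl
  have htsucc : ∀ n, t (n + 1) = step (t n) := fun n => by
    simp only [ht, Function.iterate_succ_apply']
  -- invariant
  have hinv : ∀ n, t n ∈ A ∧ t n ≤ 1 := by
    intro n; induction n with
    | zero => exact ⟨h0, by norm_num [ht0]⟩
    | succ n ih =>
      rw [htsucc]
      rcases eq_or_lt_of_le ih.2 with h | h
      · rw [h, step1]; exact ⟨h1, le_refl 1⟩
      · obtain ⟨⟨hmem, _, hle⟩, _, _⟩ := key _ ih.1 h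
        exact ⟨hmem, hle⟩
  have hmono : ∀ n, t n ≤ t (n + 1) := by
    intro n
    rcases eq_or_lt_of_le (hinv n).2 with h | h
    · rw [htsucc, h, step1]
    · rw [htsucc]; exact le_of_lt (key _ (hinv n).1 h).1.2.1
  have hone : ∀ n, t n = 1 → t (n + 1) = 1 := by
    intro n h; rw [htsucc, h, step1]
  -- two steps advance by d
  have htwo : ∀ n, t (n + 2) = 1 ∨ t n + d ≤ t (n + 2) := by
    intro n
    rcases eq_or_lt_of_le (hinv n).2 with h | h
    · exact Or.inl (hone _ (hone _ h))
    obtain ⟨⟨hsA, hlt, hsle⟩, _, hthird⟩ := key _ (hinv n).1 h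
    rw [← htsucc] at hsA hlt hsle hthird
    rcases eq_or_lt_of_le hsle with h1' | h1'
    · exact Or.inl (hone _ h1')
    obtain ⟨⟨_, hlt2, _⟩, _, _⟩ := key _ hsA h1'
    rw [← htsucc] at hlt2
    rcases hthird with hbig | hgap
    · exact Or.inr (le_trans hbig (le_of_lt hlt2))
    · -- A ∩ Ioc (t (n+1)) (t n + d) = ∅, and t(n+2) ∈ A, t(n+2) > t(n+1)
      right
      by_contra hcon
      push_neg at hcon
      have : t (n + 2) ∈ A ∩ Set.Ioc (t (n + 1)) (t n + d) :=
        ⟨(hinv (n + 2)).1, hlt2, le_of_lt hcon⟩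
      rw [hgap] at this; exact this
  -- growth: t (2k) = 1 ∨ k • d ≤ t (2k)
  have hgrow : ∀ k : ℕ, t (2 * k) = 1 ∨ (k : ℝ) * d ≤ t (2 * k) := by
    intro k; induction k with
    | zero => right; simp [ht0]
    | succ k ih =>
      have h2 : 2 * (k + 1) = 2 * k + 2 := by ring
      rw [h2]
      rcases ih with h | h
      · exact Or.inl (hone _ (hone _ h))
      · rcases htwo (2 * k) with h' | h'
        · exact Or.inl h'
        · right; push_cast; linarith
  -- find N with t (2N) = 1
  obtain ⟨N, hN⟩ := exists_nat_gt (1 / d)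
  have hNd : 1 < (N : ℝ) * d := by
    rw [div_lt_iff₀ hd0] at hN; linarith
  have hfin : t (2 * N) = 1 := by
    rcases hgrow N with h | h
    · exact h
    · exact absurd (le_trans h (hinv (2 * N)).2) (not_le.2 hNd)
  -- take minimal m
  have hex : ∃ n, t n = 1 := ⟨2 * N, hfin⟩
  set m := Nat.find hex with hmdef
  have hm1 : t m = 1 := Nat.find_spec hex
  have hmpos : 0 < m := by
    rcases Nat.eq_zero_or_pos m with h | h
    · exfalso; rw [h] at hm1; rw [ht0] at hm1; norm_num at hm1
    · exact h
  have hjlt : ∀ j, j < m → t j < 1 := by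
    intro j hj
    rcases eq_or_lt_of_le (hinv j).2 with h | h
    · exact absurd h (Nat.find_min hex hj)
    · exact h
  refine ⟨m, t, hmpos, ht0, hm1, ?_, ?_, ?_⟩
  · intro j _; exact (hinv j).1
  · intro j hj
    rw [htsucc]
    exact (key _ (hinv j).1 (hjlt j hj)).1.2.1
  · intro j hj
    obtain ⟨_, hsecond, _⟩ := key _ (hinv j).1 (hjlt j hj)
    rw [← htsucc] at hsecond
    rcases hsecond with ⟨_, V, hV, hVsub⟩ | ⟨_, hgap⟩
    · exact Or.inr ⟨V, hV, hVsub⟩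
    · exact Or.inl hgap
end

section
/- Suppose X has well-defined scattered Π₁-products: any two paths in X admitting a scattered homotopy cut-set are path-homotopic. Let A be a homotopy cut-set for paths α, β : [0,1] → X such that for all a, b ∈ A ∩ (0,1) with a < b we have α|_{[a,b]} path-homotopic to β|_{[a,b]}. Then α is path-homotopic to β. -/
/-!
Thin `A` out to a countable closed `B ⊆ A`: keep `0`, `1`, and two sequences in `A ∩ (0,1)` (with
their limits) converging to the infimum and the supremum of `A ∩ (0,1)`. A gap of `B` then either
has both ends in `A ∩ (0,1)`, where the hypothesis on such pairs applies, or it is an end interval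
`(0,b)` / `(a,1)` containing no point of `A`, i.e. a gap of `A`. So `B` is a homotopy cut-set, and
it is scattered because a nonempty set without isolated points has a perfect closure, which is
uncountable in `ℝ`.
-/

open unitInterval

variable {X : Type*} [TopologicalSpace X]

noncomputable def subpath (α : C(ℝ, X)) (a b : ℝ) : Path (α a) (α b) where
  toFun t := α (a + (t : ℝ) * (b - a))
  continuous_toFun := α.continuous.comp (by continuity)
  source' := by simp
  target' := by
    show α (a + ((1 : unitInterval) : ℝ) * (b - a)) = α b
    rw [Set.Icc.coe_one, one_mul]
    congr 1
    ring

def HomotopyCutSet (α β : C(ℝ, X)) (A : Set ℝ) : Prop :=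
  IsClosed A ∧ IsNowhereDense A ∧ A ⊆ Set.Icc 0 1 ∧ (0:ℝ) ∈ A ∧ (1:ℝ) ∈ A ∧
  Set.EqOn α β A ∧
  ∀ a ∈ A, ∀ b ∈ A, a < b → A ∩ Set.Ioo a b = ∅ →
    ∀ (h1 : α a = β a) (h2 : α b = β b),
      (subpath α a b).Homotopic ((subpath β a b).cast h1 h2)

def ScatteredSet {Y : Type*} [TopologicalSpace Y] (S : Set Y) : Prop :=
  ∀ T ⊆ S, T.Nonempty → ∃ x ∈ T, ∃ U : Set Y, IsOpen U ∧ U ∩ T = {x}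

open Set Filter Topology Cardinal

theorem Perfect.not_countable {α : Type*} [MetricSpace α] [CompleteSpace α] {C : Set α}
    (hC : Perfect C) (hne : C.Nonempty) : ¬C.Countable := by
  obtain ⟨f, hrange, -, hinj⟩ := hC.exists_nat_bool_injection hne
  have hcont : 𝔠 ≤ #C := by
    simpa using lift_mk_le_lift_mk_of_injective (hinj.codRestrict fun x => hrange (mem_range_self x))
  rw [← le_aleph0_iff_set_countable]
  exact (aleph0_lt_continuum.trans_le hcont).not_ge

theorem Set.Countable.scatteredSet {α : Type*} [MetricSpace α] [CompleteSpace α] {K : Set α}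
    (hK : K.Countable) (hcl : IsClosed K) : ScatteredSet K := by
  intro T hTK hT
  by_contra! hiso
  have hpre : Preperfect T := by
    refine preperfect_iff_nhds.mpr fun x hx U hU => ?_
    obtain ⟨V, hVU, hVo, hxV⟩ := mem_nhds_iff.mp hU
    by_contra! honly
    exact hiso x hx V hVo <|
      eq_singleton_iff_unique_mem.mpr ⟨⟨hxV, hx⟩, fun y hy => honly y ⟨hVU hy.1, hy.2⟩⟩
  exact hpre.perfect_closure.not_countable hT.closure (hK.mono (closure_minimal hTK hcl))

section

variable {α : Type*} [ConditionallyCompleteLinearOrder α] [TopologicalSpace α] [OrderTopology α]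
  [FirstCountableTopology α]

theorem BddBelow.exists_countable_isClosed_approx {S : Set α} (hS : BddBelow S) :
    ∃ C ⊆ closure S, C.Countable ∧ IsClosed C ∧
      ∀ b, (S ∩ Iio b).Nonempty → (C ∩ S ∩ Iio b).Nonempty := by
  rcases S.eq_empty_or_nonempty with rfl | hne
  · exact ⟨∅, empty_subset _, countable_empty, isClosed_empty, fun b hb => by simp at hb⟩
  obtain ⟨u, -, hu, huS⟩ := exists_seq_tendsto_sInf hne hS
  refine ⟨insert (sInf S) (range u), insert_subset (csInf_mem_closure hne hS) ?_,
    (countable_range u).insert _, hu.isCompact_insert_range.isClosed, ?_⟩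
  · exact (range_subset_iff.mpr huS).trans subset_closure
  rintro b ⟨x, hxS, hxb⟩
  obtain ⟨n, hn⟩ := (hu.eventually (gt_mem_nhds ((csInf_le hS hxS).trans_lt hxb))).exists
  exact ⟨u n, ⟨mem_insert_of_mem _ (mem_range_self n), huS n⟩, hn⟩

theorem BddAbove.exists_countable_isClosed_approx {S : Set α} (hS : BddAbove S) :
    ∃ C ⊆ closure S, C.Countable ∧ IsClosed C ∧
      ∀ a, (S ∩ Ioi a).Nonempty → (C ∩ S ∩ Ioi a).Nonempty :=
  BddBelow.exists_countable_isClosed_approx (α := αᵒᵈ) hS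

end

theorem exists_countable_isClosed_subset_approx {A : Set ℝ} (hcl : IsClosed A) (h0 : 0 ∈ A)
    (h1 : 1 ∈ A) :
    ∃ B ⊆ A, B.Countable ∧ IsClosed B ∧ 0 ∈ B ∧ 1 ∈ B ∧
      (∀ b ≤ 1, B ∩ Ioo 0 b = ∅ → A ∩ Ioo 0 b = ∅) ∧
      (∀ a, 0 ≤ a → B ∩ Ioo a 1 = ∅ → A ∩ Ioo a 1 = ∅) := by
  set S := A ∩ Ioo 0 1
  have hSA : closure S ⊆ A := closure_minimal inter_subset_left hcl
  obtain ⟨L, hLS, hLc, hLcl, hL⟩ :=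
    BddBelow.exists_countable_isClosed_approx (S := S) ⟨0, fun x hx => hx.2.1.le⟩
  obtain ⟨R, hRS, hRc, hRcl, hR⟩ :=
    BddAbove.exists_countable_isClosed_approx (S := S) ⟨1, fun x hx => hx.2.2.le⟩
  have hends : ({0, 1} : Set ℝ).Finite := toFinite _
  refine ⟨{0, 1} ∪ L ∪ R,
    union_subset (union_subset (pair_subset h0 h1) (hLS.trans hSA)) (hRS.trans hSA),
    (hends.countable.union hLc).union hRc, (hends.isClosed.union hLcl).union hRcl,
    by simp, by simp, ?_, ?_⟩
  · refine fun b hb hB => eq_empty_of_forall_notMem fun x ⟨hxA, hx0, hxb⟩ => ?_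
    obtain ⟨c, ⟨hcL, hcS⟩, hcb⟩ := hL b ⟨x, ⟨hxA, hx0, hxb.trans_le hb⟩, hxb⟩
    exact eq_empty_iff_forall_notMem.mp hB c ⟨Or.inl (Or.inr hcL), hcS.2.1, hcb⟩
  · refine fun a ha hB => eq_empty_of_forall_notMem fun x ⟨hxA, hax, hx1⟩ => ?_
    obtain ⟨c, ⟨hcR, hcS⟩, hac⟩ := hR a ⟨x, ⟨hxA, ha.trans_lt hax, hx1⟩, hax⟩
    exact eq_empty_iff_forall_notMem.mp hB c ⟨Or.inr hcR, hac, hcS.2.2⟩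

theorem HomotopyCutSet.of_subset {α β : C(ℝ, X)} {A B : Set ℝ} (hA : HomotopyCutSet α β A)
    (hmid : ∀ a ∈ A ∩ Ioo (0:ℝ) 1, ∀ b ∈ A ∩ Ioo (0:ℝ) 1, a < b →
      ∀ (h1 : α a = β a) (h2 : α b = β b),
        (subpath α a b).Homotopic ((subpath β a b).cast h1 h2))
    (hBA : B ⊆ A) (hBcl : IsClosed B) (hBnd : IsNowhereDense B) (h0 : 0 ∈ B) (h1 : 1 ∈ B)
    (hleft : ∀ b ≤ 1, B ∩ Ioo 0 b = ∅ → A ∩ Ioo 0 b = ∅)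
    (hright : ∀ a, 0 ≤ a → B ∩ Ioo a 1 = ∅ → A ∩ Ioo a 1 = ∅) :
    HomotopyCutSet α β B := by
  obtain ⟨-, -, hA01, -, -, hAeq, hAgap⟩ := hA
  refine ⟨hBcl, hBnd, hBA.trans hA01, h0, h1, hAeq.mono hBA, ?_⟩
  intro a ha b hb hab hBgap
  obtain ⟨ha0, -⟩ := hA01 (hBA ha)
  obtain ⟨-, hb1⟩ := hA01 (hBA hb)
  rcases ha0.eq_or_lt with rfl | ha0
  · exact hAgap 0 (hBA ha) b (hBA hb) hab (hleft b hb1 hBgap)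
  rcases hb1.eq_or_lt with rfl | hb1
  · exact hAgap a (hBA ha) 1 (hBA hb) hab (hright a ha0.le hBgap)
  exact hmid a ⟨hBA ha, ha0, hab.trans hb1⟩ b ⟨hBA hb, ha0.trans hab, hb1⟩ hab

/-- Suppose `X` has well-defined scattered `Π₁`-products. If `A` is a homotopy cut-set for paths
`α, β` such that `α|_{[a,b]} ≃ β|_{[a,b]}` for all `a < b` in `A ∩ (0,1)`, then `α ≃ β`. -/
theorem stmt11 {X : Type*} [TopologicalSpace X]
    (hX : ∀ (α β : C(ℝ, X)) (A : Set ℝ), HomotopyCutSet α β A → ScatteredSet A →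
      ∀ (h1 : α 0 = β 0) (h2 : α 1 = β 1),
        (subpath α 0 1).Homotopic ((subpath β 0 1).cast h1 h2))
    (α β : C(ℝ, X)) (A : Set ℝ) (hA : HomotopyCutSet α β A)
    (hmid : ∀ a ∈ A ∩ Set.Ioo (0:ℝ) 1, ∀ b ∈ A ∩ Set.Ioo (0:ℝ) 1, a < b →
      ∀ (h1 : α a = β a) (h2 : α b = β b),
        (subpath α a b).Homotopic ((subpath β a b).cast h1 h2)) :
    ∀ (h1 : α 0 = β 0) (h2 : α 1 = β 1),
      (subpath α 0 1).Homotopic ((subpath β 0 1).cast h1 h2) := by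
  obtain ⟨hcl, -, -, h0A, h1A, -⟩ := id hA
  obtain ⟨B, hBA, hBc, hBcl, h0B, h1B, hleft, hright⟩ :=
    exists_countable_isClosed_subset_approx hcl h0A h1A
  have hBnd : IsNowhereDense B :=
    hBcl.isNowhereDense_iff.mpr (interior_eq_empty_iff_dense_compl.mpr (hBc.dense_compl ℝ))
  exact hX α β B (hA.of_subset hmid hBA hBcl hBnd h0B h1B hleft hright) (hBc.scatteredSet hBcl)
end
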